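/- arXiv:2211.07163 — 2 statements merged into one kernel-verified Lean document; each statement's English description precedes it below -/
import Mathlib

section
/- A dcpo L is a strongly continuous domain (i.e., (L, σ_s(L)) is a C-space) if and only if for every x ∈ L, the set ⇓_s x is directed, x = sup ⇓_s x, and ⇑_s x is strong Scott topology open. -/
open Set

variable {L : Type*}

/-- A directed subset: nonempty and directed under `≤`. -/
def DirSet [Preorder L] (D : Set L) : Prop := D.Nonempty ∧ DirectedOn (· ≤ ·) D

/-- Strongly Scott open sets (the family `σ^s(L)`). -/
def StronglyScottOpen [Preorder L] [SupSet L] (U : Set L) : Prop :=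
  IsUpperSet U ∧ ∀ D : Set L, DirSet D → ∀ x : L,
    Ici (sSup D) ∩ Ici x ⊆ U → ∃ d ∈ D, Ici d ∩ Ici x ⊆ U

/-- The strong Scott topology `σ_s(L)`, generated by the strongly Scott open sets. -/
def strongScott (L : Type*) [Preorder L] [SupSet L] : TopologicalSpace L :=
  TopologicalSpace.generateFrom {U | StronglyScottOpen U}

/-- Scott open sets. -/
def ScottOpen [Preorder L] [SupSet L] (U : Set L) : Prop :=
  IsUpperSet U ∧ ∀ D : Set L, DirSet D → sSup D ∈ U → (D ∩ U).Nonempty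

/-- The Scott topology `σ(L)`. -/
def scottTop (L : Type*) [Preorder L] [SupSet L] : TopologicalSpace L :=
  TopologicalSpace.generateFrom {U | ScottOpen U}

/-- The upper topology `υ(L)`. -/
def upperTop (L : Type*) [Preorder L] : TopologicalSpace L :=
  TopologicalSpace.generateFrom {U | ∃ x : L, U = (Iic x)ᶜ}

/-- The lower topology `ω(L)`. -/
def lowerTop (L : Type*) [Preorder L] : TopologicalSpace L :=
  TopologicalSpace.generateFrom {U | ∃ x : L, U = (Ici x)ᶜ}

/-- The strong way-below relation `x ≪_s y`. -/
def SWayBelow [Preorder L] (x y : L) : Prop :=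
  ∀ D : Set L, DirSet D → ∀ a : L,
    (⋂ d ∈ D, Ici d) ∩ Ici a ⊆ Ici y → ∃ d ∈ D, Ici d ∩ Ici a ⊆ Ici x

/-- The way-below relation `x ≪ y`. -/
def WayBelow [Preorder L] [SupSet L] (x y : L) : Prop :=
  ∀ D : Set L, DirSet D → y ≤ sSup D → ∃ d ∈ D, x ≤ d

/-- `X` with topology `t` is a C-space (w.r.t. the order of `L`). -/
def IsCSpace [Preorder L] (t : TopologicalSpace L) : Prop :=
  ∀ U : Set L, @IsOpen _ (t) U → ∀ x ∈ U, ∃ y ∈ U,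
    x ∈ @interior L t (Ici y) ∧ Ici y ⊆ U

/-- `L` is a strongly continuous domain. -/
def StronglyContinuousDomain (L : Type*) [Preorder L] [SupSet L] : Prop :=
  IsCSpace (strongScott L)

/-- `L` is a continuous domain. -/
def ContinuousDomain (L : Type*) [Preorder L] [SupSet L] : Prop :=
  ∀ x : L, DirSet {y | WayBelow y x} ∧ IsLUB {y | WayBelow y x} x

/-- `L` is a hypercontinuous domain. -/
def HypercontinuousDomain (L : Type*) [Preorder L] : Prop :=
  ∀ x : L, DirSet {y | x ∈ @interior L (upperTop L) (Ici y)} ∧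
    IsLUB {y | x ∈ @interior L (upperTop L) (Ici y)} x

/-- The strong Lawson topology `λ_s(L)`: common refinement of `σ_s(L)` and `ω(L)`. -/
def strongLawson (L : Type*) [Preorder L] [SupSet L] : TopologicalSpace L :=
  TopologicalSpace.generateFrom
    {U | @IsOpen _ (strongScott L) U ∨ @IsOpen _ (lowerTop L) U}

/-!
In a C-space for `σ_s(L)`, `y ≪_s x` holds exactly when `x ∈ int ↑y`. One direction holds
because the strongly Scott open sets form a base; for the other, `{y | x ∈ int ↑y}` is directed
with supremum `x` (the sets `(↓c)ᶜ` are strongly Scott open), so `≪_s`, which implies `≪`, picks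
out one of its members above `y`. Conversely, if `⇓_s x` is directed with supremum `x`, a strongly
Scott open `B ∋ x` contains some `d ≪_s x`, and `x ∈ ⇑_s d ⊆ ↑d ⊆ B` with `⇑_s d` open.
-/

open Topology

section Preorder
variable [Preorder L]

lemma dirSet_singleton (y : L) : DirSet ({y} : Set L) :=
  ⟨singleton_nonempty y, directedOn_singleton y⟩

lemma SWayBelow.le {x y : L} (h : SWayBelow x y) : x ≤ y := by
  obtain ⟨d, rfl, hd⟩ := h {y} (dirSet_singleton y) y fun z hz => hz.2
  exact hd ⟨le_rfl, le_rfl⟩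

section CSpace
variable [t : TopologicalSpace L]

lemma IsCSpace.dirSet_setOf_mem_interior_Ici (hC : IsCSpace t) (x : L) :
    DirSet {y | x ∈ interior (Ici y)} := by
  refine ⟨?_, fun z₁ hz₁ z₂ hz₂ => ?_⟩
  · obtain ⟨y, -, hy, -⟩ := hC univ isOpen_univ x trivial
    exact ⟨y, hy⟩
  · obtain ⟨y, ⟨hy₁, hy₂⟩, hy, -⟩ :=
      hC _ (isOpen_interior.inter isOpen_interior) x ⟨hz₁, hz₂⟩
    exact ⟨y, hy, interior_subset hy₁, interior_subset hy₂⟩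

lemma IsCSpace.isLUB_setOf_mem_interior_Ici (hC : IsCSpace t)
    (hIic : ∀ c : L, IsOpen (Iic c)ᶜ) (x : L) : IsLUB {y | x ∈ interior (Ici y)} x := by
  refine ⟨fun y hy => interior_subset hy, fun b hb => ?_⟩
  by_contra hxb
  obtain ⟨y, -, hy, hyb⟩ := hC _ (hIic b) x hxb
  exact hyb le_rfl (hb hy)

end CSpace

section SupSet
variable [SupSet L]

lemma stronglyScottOpen_univ : StronglyScottOpen (univ : Set L) :=
  ⟨isUpperSet_univ, fun _ hD _ _ => ⟨_, hD.1.some_mem, subset_univ _⟩⟩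

lemma StronglyScottOpen.inter {U V : Set L} (hU : StronglyScottOpen U)
    (hV : StronglyScottOpen V) : StronglyScottOpen (U ∩ V) := by
  refine ⟨hU.1.inter hV.1, fun D hD x h => ?_⟩
  obtain ⟨d₁, hd₁, h₁⟩ := hU.2 D hD x (h.trans inter_subset_left)
  obtain ⟨d₂, hd₂, h₂⟩ := hV.2 D hD x (h.trans inter_subset_right)
  obtain ⟨d, hd, hd₁d, hd₂d⟩ := hD.2 d₁ hd₁ d₂ hd₂
  exact ⟨d, hd, fun z hz =>
    ⟨h₁ ⟨hd₁d.trans hz.1, hz.2⟩, h₂ ⟨hd₂d.trans hz.1, hz.2⟩⟩⟩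

lemma StronglyScottOpen.isOpen {U : Set L} (hU : StronglyScottOpen U) :
    IsOpen[strongScott L] U :=
  .basic U hU

lemma exists_stronglyScottOpen_mem_subset {U : Set L} (hU : IsOpen[strongScott L] U)
    {x : L} (hx : x ∈ U) : ∃ B, StronglyScottOpen B ∧ x ∈ B ∧ B ⊆ U := by
  induction hU generalizing x with
  | basic V hV => exact ⟨V, hV, hx, subset_rfl⟩
  | univ => exact ⟨univ, stronglyScottOpen_univ, trivial, subset_rfl⟩
  | inter V W _ _ ihV ihW =>
    obtain ⟨B₁, hB₁, hxB₁, hB₁V⟩ := ihV hx.1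
    obtain ⟨B₂, hB₂, hxB₂, hB₂W⟩ := ihW hx.2
    exact ⟨B₁ ∩ B₂, hB₁.inter hB₂, ⟨hxB₁, hxB₂⟩, inter_subset_inter hB₁V hB₂W⟩
  | sUnion S _ ih =>
    obtain ⟨V, hV, hxV⟩ := hx
    obtain ⟨B, hB, hxB, hBV⟩ := ih V hV hxV
    exact ⟨B, hB, hxB, hBV.trans (subset_sUnion_of_mem hV)⟩

lemma StronglyScottOpen.scottOpen [OrderBot L] {U : Set L} (hU : StronglyScottOpen U) :
    ScottOpen U := by
  refine ⟨hU.1, fun D hD hDU => ?_⟩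
  obtain ⟨d, hd, hdU⟩ := hU.2 D hD ⊥ fun z hz => hU.1 hz.1 hDU
  exact ⟨d, hd, hdU ⟨le_rfl, bot_le⟩⟩

end SupSet

end Preorder

section CompletePartialOrder
variable [CompletePartialOrder L]

lemma biInter_Ici_eq_Ici_sSup {D : Set L} (hD : DirectedOn (· ≤ ·) D) :
    ⋂ d ∈ D, Ici d = Ici (sSup D) := by
  ext z
  simp only [mem_iInter, mem_Ici]
  exact ⟨hD.sSup_le, fun hz d hd => (hD.le_sSup hd).trans hz⟩

lemma SWayBelow.wayBelow {x y : L} (h : SWayBelow x y) : WayBelow x y := by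
  intro D hD hyD
  have hsub : (⋂ d ∈ D, Ici d) ∩ Ici ⊥ ⊆ Ici y := by
    rw [biInter_Ici_eq_Ici_sSup hD.2]
    exact fun z hz => hyD.trans hz.1
  obtain ⟨d, hd, hdx⟩ := h D hD ⊥ hsub
  exact ⟨d, hd, hdx ⟨le_rfl, bot_le⟩⟩

lemma stronglyScottOpen_compl_Iic (c : L) : StronglyScottOpen (Iic c)ᶜ := by
  refine ⟨(isLowerSet_Iic c).compl, fun D hD x h => ?_⟩
  by_contra! hD_c
  have hbound : ∀ d ∈ D, ∃ z, d ≤ z ∧ x ≤ z ∧ z ≤ c := fun d hd => by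
    obtain ⟨z, hz, hzc⟩ := not_subset.1 (hD_c d hd)
    exact ⟨z, hz.1, hz.2, not_not.1 hzc⟩
  obtain ⟨d₀, hd₀⟩ := hD.1
  obtain ⟨z, -, hxz, hzc⟩ := hbound d₀ hd₀
  have hDc : sSup D ≤ c := hD.2.sSup_le fun d hd => by
    obtain ⟨z, hdz, -, hzc⟩ := hbound d hd
    exact hdz.trans hzc
  exact h ⟨hDc, hxz.trans hzc⟩ le_rfl

lemma sWayBelow_of_mem_interior_Ici {x y : L}
    (h : x ∈ @interior L (strongScott L) (Ici y)) : SWayBelow y x := by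
  let _ := strongScott L
  obtain ⟨B, hB, hxB, hBy⟩ := exists_stronglyScottOpen_mem_subset isOpen_interior h
  intro D hD a hDa
  rw [biInter_Ici_eq_Ici_sSup hD.2] at hDa
  obtain ⟨d, hd, hdB⟩ := hB.2 D hD a fun z hz => hB.1 (hDa hz) hxB
  exact ⟨d, hd, hdB.trans (hBy.trans interior_subset)⟩

lemma StronglyContinuousDomain.sWayBelow_iff_mem_interior_Ici
    (hC : StronglyContinuousDomain L) (x y : L) :
    SWayBelow y x ↔ x ∈ @interior L (strongScott L) (Ici y) := by
  let _ := strongScott L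
  refine ⟨fun h => ?_, sWayBelow_of_mem_interior_Ici⟩
  have hdir := hC.dirSet_setOf_mem_interior_Ici x
  have hlub := hC.isLUB_setOf_mem_interior_Ici
    (fun c => (stronglyScottOpen_compl_Iic c).isOpen) x
  obtain ⟨d, hd, hyd⟩ := h.wayBelow _ hdir (hlub.unique hdir.2.isLUB_sSup).le
  exact interior_mono (Ici_subset_Ici.2 hyd) hd

end CompletePartialOrder

theorem stronglyContinuousDomain_iff [CompletePartialOrder L] :
    StronglyContinuousDomain L ↔
      ∀ x : L, DirSet {y | SWayBelow y x} ∧ IsLUB {y | SWayBelow y x} x ∧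
        @IsOpen _ (strongScott L) {y | SWayBelow x y} := by
  let _ := strongScott L
  constructor
  · intro hC x
    have hbelow : {y | SWayBelow y x} = {y | x ∈ interior (Ici y)} :=
      ext (hC.sWayBelow_iff_mem_interior_Ici x)
    have habove : {y | SWayBelow x y} = interior (Ici x) :=
      ext fun y => hC.sWayBelow_iff_mem_interior_Ici y x
    rw [hbelow, habove]
    exact ⟨hC.dirSet_setOf_mem_interior_Ici x,
      hC.isLUB_setOf_mem_interior_Ici (fun c => (stronglyScottOpen_compl_Iic c).isOpen) x,
      isOpen_interior⟩
  · intro h U hU x hxU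
    obtain ⟨B, hB, hxB, hBU⟩ := exists_stronglyScottOpen_mem_subset hU hxU
    obtain ⟨hdir, hlub, -⟩ := h x
    have hsup : sSup {y | SWayBelow y x} = x := hdir.2.isLUB_sSup.unique hlub
    obtain ⟨d, hdx, hdB⟩ := hB.scottOpen.2 _ hdir (by rwa [hsup])
    have hdU : Ici d ⊆ U := fun z hz => hBU (hB.1 hz hdB)
    exact ⟨d, hdU le_rfl, interior_maximal (fun _ => SWayBelow.le) (h d).2.2 hdx, hdU⟩
end

section
/- If L is a strongly continuous domain, then (L, σ_s(L)) is locally compact; and if L additionally has a least element, then (L, σ_s(L)) is compact. -/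
open Set

variable {L : Type*}

/-! Strongly Scott open sets are upper sets, so every open set containing `y` contains all of
`Ici y`; hence `Ici y` is compact, the point `y` alone catching every filter on it. In a C-space
every neighbourhood of `x` contains some `Ici y` that is still a neighbourhood of `x`, so these
compact sets form a neighbourhood base. With a least element `b` the whole space is `Ici b`. -/

open Filter Topology

section UpperOpenSets

variable {X : Type*}

theorem isUpperSet_of_isOpen_generateFrom [Preorder X] {g : Set (Set X)}
    (hg : ∀ s ∈ g, IsUpperSet s) {U : Set X} (hU : IsOpen[.generateFrom g] U) : IsUpperSet U := by
  induction hU with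
  | basic s hs => exact hg s hs
  | univ => exact isUpperSet_univ
  | inter _ _ _ _ ih₁ ih₂ => exact ih₁.inter ih₂
  | sUnion _ _ ih => exact isUpperSet_sUnion ih

variable [TopologicalSpace X]

theorem isCompact_of_mem_of_principal_le_nhds {s : Set X} {x : X} (hx : x ∈ s)
    (h : 𝓟 s ≤ 𝓝 x) : IsCompact s :=
  fun _ hf hfs => ⟨x, hx, ClusterPt.of_le_nhds' (hfs.trans h) hf⟩

variable [Preorder X] (hup : ∀ U : Set X, IsOpen U → IsUpperSet U)
include hup

theorem principal_Ici_le_nhds_of_isUpperSet (y : X) : 𝓟 (Ici y) ≤ 𝓝 y :=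
  (nhds_basis_opens y).ge_iff.2 fun U ⟨hyU, hU⟩ =>
    mem_principal.2 fun _ hz => hup U hU hz hyU

theorem isCompact_Ici_of_isUpperSet (y : X) : IsCompact (Ici y) :=
  isCompact_of_mem_of_principal_le_nhds le_rfl (principal_Ici_le_nhds_of_isUpperSet hup y)

theorem locallyCompactSpace_of_isCSpace (hC : IsCSpace ‹TopologicalSpace X›) :
    LocallyCompactSpace X := by
  refine ⟨fun x n hn => ?_⟩
  obtain ⟨U, hUn, hU, hxU⟩ := mem_nhds_iff.1 hn
  obtain ⟨y, -, hxy, hyU⟩ := hC U hU x hxU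
  exact ⟨Ici y, mem_interior_iff_mem_nhds.1 hxy, hyU.trans hUn,
    isCompact_Ici_of_isUpperSet hup y⟩

theorem compactSpace_of_isBot {b : X} (hb : IsBot b) : CompactSpace X :=
  isCompact_univ_iff.1 <| eq_univ_of_forall hb ▸ isCompact_Ici_of_isUpperSet hup b

end UpperOpenSets

theorem isUpperSet_of_isOpen_strongScott [Preorder L] [SupSet L] {U : Set L}
    (hU : IsOpen[strongScott L] U) : IsUpperSet U :=
  isUpperSet_of_isOpen_generateFrom (fun _ hs => hs.1) hU

theorem strongScott_locallyCompact [CompletePartialOrder L]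
    (hL : StronglyContinuousDomain L) :
    @LocallyCompactSpace L (strongScott L) ∧
    ((∃ b : L, ∀ x : L, b ≤ x) → @CompactSpace L (strongScott L)) := by
  let _ := strongScott L
  have hup : ∀ U : Set L, IsOpen U → IsUpperSet U := fun _ => isUpperSet_of_isOpen_strongScott
  exact ⟨locallyCompactSpace_of_isCSpace hup hL, fun ⟨_, hb⟩ => compactSpace_of_isBot hup hb⟩
end
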